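/- arXiv:2503.15241 — 5 statements merged into one kernel-verified Lean document; each statement's English description precedes it below -/
import Mathlib

section
/- The binary operation ∘ on sl₂(ℂ) = span{e, f, h} defined by h∘e = −2e, e∘h = −4e, h∘f = 2f, f∘h = 4f, e∘f = (1/2)h, f∘e = −(1/2)h, h∘h = e∘e = f∘f = 0 satisfies the anti-pre-Lie identities, and its commutator x∘y − y∘x recovers the standard Lie bracket of sl₂(ℂ) (with [h,e] = 2e, [h,f] = −2f, [e,f] = h). -/
/-!
Both identities are trilinear, so it suffices to check them on triples of basis vectors. For the
Jacobi identity it is easier to check, on the basis, the Leibniz rule for the commutator bracket,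
which is alternating with the structure constants of `sl₂`; Jacobi then follows from Leibniz and
antisymmetry.
-/

namespace LinearMap

theorem ext_basis₃ {R M₁ M₂ M₃ N ι₁ ι₂ ι₃ : Type*} [CommSemiring R] [AddCommMonoid M₁]
    [Module R M₁] [AddCommMonoid M₂] [Module R M₂] [AddCommMonoid M₃] [Module R M₃]
    [AddCommMonoid N] [Module R N] (b₁ : Module.Basis ι₁ R M₁) (b₂ : Module.Basis ι₂ R M₂)
    (b₃ : Module.Basis ι₃ R M₃) {T₁ T₂ : M₁ →ₗ[R] M₂ →ₗ[R] M₃ →ₗ[R] N}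
    (h : ∀ i j k, T₁ (b₁ i) (b₂ j) (b₃ k) = T₂ (b₁ i) (b₂ j) (b₃ k)) : T₁ = T₂ :=
  ext_basis b₁ b₂ fun i j => b₃.ext fun k => h i j k

variable {R M ι : Type*} [CommRing R] [AddCommGroup M] [Module R M]
  (b : Module.Basis ι R M) {c : M →ₗ[R] M →ₗ[R] M}

theorem antiPreLie_of_basis
    (h : ∀ i j k, c (b i) (c (b j) (b k)) - c (b j) (c (b i) (b k)) =
      c (c (b j) (b i) - c (b i) (b j)) (b k)) (x y z : M) :
    c x (c y z) - c y (c x z) = c (c y x - c x y) z := by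
  have key : (llcomp R M M M).compl₁₂ c c - ((llcomp R M M M).compl₁₂ c c).flip =
      (c.flip - c).compr₂ c :=
    ext_basis₃ b b b fun i j k => by simpa using h i j k
  simpa using congr($key x y z)

theorem leibniz_of_basis
    (h : ∀ i j k, c (b i) (c (b j) (b k)) = c (c (b i) (b j)) (b k) + c (b j) (c (b i) (b k)))
    (x y z : M) : c x (c y z) = c (c x y) z + c y (c x z) := by
  have key : (llcomp R M M M).compl₁₂ c c =
      c.compr₂ c + ((llcomp R M M M).compl₁₂ c c).flip :=
    ext_basis₃ b b b fun i j k => by simpa using h i j k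
  simpa using congr($key x y z)

theorem IsAlt.jacobi_of_leibniz (halt : c.IsAlt)
    (hc : ∀ x y z, c x (c y z) = c (c x y) z + c y (c x z)) (x y z : M) :
    c (c x y) z + c (c y z) x + c (c z x) y = 0 := by
  rw [← halt.neg x (c y z), ← halt.neg y (c z x), ← halt.neg x z, map_neg, neg_neg, hc x y z]
  abel

end LinearMap

theorem sl2_leibniz {R A : Type*} [CommRing R] [AddCommGroup A] [Module R A]
    (B : Module.Basis (Fin 3) R A) {br : A →ₗ[R] A →ₗ[R] A} (halt : br.IsAlt)
    (hhe : br (B 2) (B 0) = (2 : R) • B 0) (hhf : br (B 2) (B 1) = (-2 : R) • B 1)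
    (hef : br (B 0) (B 1) = B 2) (x y z : A) :
    br x (br y z) = br (br x y) z + br y (br x z) := by
  have heh : br (B 0) (B 2) = (-2 : R) • B 0 := by rw [← halt.neg, hhe]; module
  have hfh : br (B 1) (B 2) = (2 : R) • B 1 := by rw [← halt.neg, hhf]; module
  have hfe : br (B 1) (B 0) = -B 2 := by rw [← halt.neg, hef]
  refine LinearMap.leibniz_of_basis B (fun i j k => ?_) x y z
  fin_cases i <;> fin_cases j <;> fin_cases k <;>
    simp [halt.self_eq_zero, hhe, hhf, hef, heh, hfh, hfe]

theorem sl2_antiPreLie {K A : Type*} [Field K] [AddCommGroup A] [Module K A]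
    (B : Module.Basis (Fin 3) K A) {c : A →ₗ[K] A →ₗ[K] A}
    (hhe : c (B 2) (B 0) = (-2 : K) • B 0) (heh : c (B 0) (B 2) = (-4 : K) • B 0)
    (hhf : c (B 2) (B 1) = (2 : K) • B 1) (hfh : c (B 1) (B 2) = (4 : K) • B 1)
    (hef : c (B 0) (B 1) = (1/2 : K) • B 2) (hfe : c (B 1) (B 0) = (-(1/2) : K) • B 2)
    (hhh : c (B 2) (B 2) = 0) (hee : c (B 0) (B 0) = 0) (hff : c (B 1) (B 1) = 0) (x y z : A) :
    c x (c y z) - c y (c x z) = c (c y x - c x y) z := by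
  refine LinearMap.antiPreLie_of_basis B (fun i j k => ?_) x y z
  fin_cases i <;> fin_cases j <;> fin_cases k <;>
    simp [hhe, heh, hhf, hfh, hef, hfe, hhh, hee, hff, smul_smul] <;> module

/-- The operation `∘` on `sl₂(ℂ)` defined by `h∘e = −2e`, `e∘h = −4e`,
`h∘f = 2f`, `f∘h = 4f`, `e∘f = (1/2)h`, `f∘e = −(1/2)h`, `h∘h = e∘e = f∘f = 0`
satisfies the anti-pre-Lie identities, and its commutator recovers the standard
Lie bracket of `sl₂(ℂ)`: `[h,e] = 2e`, `[h,f] = −2f`, `[e,f] = h`. -/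
theorem stmt2 {A : Type*} [AddCommGroup A] [Module ℂ A]
    (B : Module.Basis (Fin 3) ℂ A) (e f h : A)
    (he : e = B 0) (hf : f = B 1) (hh : h = B 2)
    (c : A →ₗ[ℂ] A →ₗ[ℂ] A)
    (hhe : c h e = (-2 : ℂ) • e) (heh : c e h = (-4 : ℂ) • e)
    (hhf : c h f = (2 : ℂ) • f) (hfh : c f h = (4 : ℂ) • f)
    (hef : c e f = (1/2 : ℂ) • h) (hfe : c f e = (-(1/2) : ℂ) • h)
    (hhh : c h h = 0) (hee : c e e = 0) (hff : c f f = 0) :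
    (∀ x y z : A, c x (c y z) - c y (c x z) = c (c y x - c x y) z) ∧
    (∀ x y z : A,
      (c (c x y - c y x) z - c z (c x y - c y x)) +
      (c (c y z - c z y) x - c x (c y z - c z y)) +
      (c (c z x - c x z) y - c y (c z x - c x z)) = 0) ∧
    (c h e - c e h = (2 : ℂ) • e) ∧
    (c h f - c f h = (-2 : ℂ) • f) ∧
    (c e f - c f e = h) := by
  subst he hf hh
  have bracket_he : c (B 2) (B 0) - c (B 0) (B 2) = (2 : ℂ) • B 0 := by rw [hhe, heh]; module
  have bracket_hf : c (B 2) (B 1) - c (B 1) (B 2) = (-2 : ℂ) • B 1 := by rw [hhf, hfh]; module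
  have bracket_ef : c (B 0) (B 1) - c (B 1) (B 0) = B 2 := by rw [hef, hfe]; module
  have bracket_alt : (c - c.flip).IsAlt := fun x => by simp
  refine ⟨sl2_antiPreLie B hhe heh hhf hfh hef hfe hhh hee hff, fun x y z => ?_,
    bracket_he, bracket_hf, bracket_ef⟩
  have leibniz := sl2_leibniz B bracket_alt bracket_he bracket_hf bracket_ef
  simpa using bracket_alt.jacobi_of_leibniz leibniz x y z
end

section
/- Suppose ∘ is a compatible root graded anti-pre-Lie algebraic structure on sl₂(ℂ), so that there exist constants α₁, β₁, γ₁, λ₁ ∈ ℂ with h∘e = α₁e, e∘h = (α₁−2)e, h∘f = β₁f, f∘h = (β₁+2)f, e∘f = γ₁h, f∘e = (γ₁−1)h, h∘h = λ₁h, e∘e = f∘f = 0. Then α₁ ≠ 2 and β₁ ≠ −2. -/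
/-!
Evaluating the anti-pre-Lie identity on `(e, f, e)` and on `(f, e, f)`, and using
`[f, e] = -h`, `[e, f] = h`, gives `(γ₁ - 1)(α₁ - 2) = -α₁` and `γ₁(β₁ + 2) = β₁`.
At `α₁ = 2`, resp. `β₁ = -2`, the left-hand side vanishes while the right-hand side is `-2`.
-/

def IsAntiPreLie {R A : Type*} [CommRing R] [AddCommGroup A] [Module R A]
    (c : A →ₗ[R] A →ₗ[R] A) : Prop :=
  ∀ x y z : A, c x (c y z) - c y (c x z) = c (c y x - c x y) z

namespace IsAntiPreLie

variable {R A : Type*} [CommRing R] [IsDomain R] [AddCommGroup A] [Module R A]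
  [Module.IsTorsionFree R A] {c : A →ₗ[R] A →ₗ[R] A} {e f h : A}

theorem sub_one_mul_sub_two_eq_neg (hc : IsAntiPreLie c) {α γ : R} (he : e ≠ 0)
    (hhe : c h e = α • e) (heh : c e h = (α - 2) • e)
    (hef : c e f = γ • h) (hfe : c f e = (γ - 1) • h) (hee : c e e = 0) :
    (γ - 1) * (α - 2) = -α := by
  refine smul_left_injective R he ?_
  have key := hc e f e
  simp only [hfe, hee, hef, heh, hhe, map_zero, sub_zero, map_smul, map_sub,
    LinearMap.sub_apply, LinearMap.smul_apply, smul_smul] at key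
  simp only [key, ← sub_smul]
  congr 1
  ring

theorem mul_add_two_eq (hc : IsAntiPreLie c) {β γ : R} (hf : f ≠ 0)
    (hhf : c h f = β • f) (hfh : c f h = (β + 2) • f)
    (hef : c e f = γ • h) (hfe : c f e = (γ - 1) • h) (hff : c f f = 0) :
    γ * (β + 2) = β := by
  refine smul_left_injective R hf ?_
  have key := hc f e f
  simp only [hef, hff, hfe, hfh, hhf, map_zero, sub_zero, map_smul, map_sub,
    LinearMap.sub_apply, LinearMap.smul_apply, smul_smul] at key
  simp only [key, ← sub_smul]
  congr 1
  ring

end IsAntiPreLie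

theorem stmt3_general {A : Type*} [AddCommGroup A] [Module ℂ A]
    (B : Module.Basis (Fin 3) ℂ A) (e f h : A)
    (he : e = B 0) (hf : f = B 1)
    (c : A →ₗ[ℂ] A →ₗ[ℂ] A)
    (α₁ β₁ γ₁ : ℂ)
    (apl : ∀ x y z : A, c x (c y z) - c y (c x z) = c (c y x - c x y) z)
    (hhe : c h e = α₁ • e) (heh : c e h = (α₁ - 2) • e)
    (hhf : c h f = β₁ • f) (hfh : c f h = (β₁ + 2) • f)
    (hef : c e f = γ₁ • h) (hfe : c f e = (γ₁ - 1) • h)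
    (hee : c e e = 0) (hff : c f f = 0) :
    α₁ ≠ 2 ∧ β₁ ≠ -2 := by
  have hα := IsAntiPreLie.sub_one_mul_sub_two_eq_neg apl (he ▸ B.ne_zero 0) hhe heh hef hfe hee
  have hβ := IsAntiPreLie.mul_add_two_eq apl (hf ▸ B.ne_zero 1) hhf hfh hef hfe hff
  constructor
  · rintro rfl
    norm_num at hα
  · rintro rfl
    norm_num at hβ

/-- For a compatible root graded anti-pre-Lie algebraic structure on
`sl₂(ℂ)`, written with constants `α₁, β₁, γ₁, λ₁`, one has `α₁ ≠ 2` and `β₁ ≠ −2`. -/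
theorem stmt3 {A : Type*} [AddCommGroup A] [Module ℂ A]
    (B : Module.Basis (Fin 3) ℂ A) (e f h : A)
    (he : e = B 0) (hf : f = B 1) (hh : h = B 2)
    (c : A →ₗ[ℂ] A →ₗ[ℂ] A)
    (α₁ β₁ γ₁ lam₁ : ℂ)
    (apl : ∀ x y z : A, c x (c y z) - c y (c x z) = c (c y x - c x y) z)
    (jac : ∀ x y z : A,
      (c (c x y - c y x) z - c z (c x y - c y x)) +
      (c (c y z - c z y) x - c x (c y z - c z y)) +
      (c (c z x - c x z) y - c y (c z x - c x z)) = 0)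
    (hhe : c h e = α₁ • e) (heh : c e h = (α₁ - 2) • e)
    (hhf : c h f = β₁ • f) (hfh : c f h = (β₁ + 2) • f)
    (hef : c e f = γ₁ • h) (hfe : c f e = (γ₁ - 1) • h)
    (hhh : c h h = lam₁ • h) (hee : c e e = 0) (hff : c f f = 0) :
    α₁ ≠ 2 ∧ β₁ ≠ -2 :=
  stmt3_general B e f h he hf c α₁ β₁ γ₁ apl hhe heh hhf hfh hef hfe hee hff
end

section
/- Let (b_n, ∘) be a compatible anti-pre-Lie algebraic structure on b_n (n ≥ 2) satisfying the grading conditions x∘y, y∘x ∈ span{z₁,...,z_n}, z_i∘x, x∘z_i ∈ ℂx, z_i∘y, y∘z_i ∈ ℂy, z_i∘z_j ∈ span{z₁,...,z_n}, and x∘x = y∘y = 0. Write z₁∘x = α₁x and z₁∘y = β₁y. Then α₁ ∉ {0, −1} and consequently α₁ = −2 and β₁ = 2, i.e., z₁∘x = −2x, x∘z₁ = −4x, z₁∘y = 2y, y∘z₁ = 4y. -/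
/-- For a compatible anti-pre-Lie algebraic structure on `b_n` (`n ≥ 2`)
satisfying the grading conditions, writing `z₁∘x = α₁x` and `z₁∘y = β₁y`, one has
`α₁ ∉ {0, −1}`, and consequently `α₁ = −2`, `β₁ = 2`, i.e. `z₁∘x = −2x`, `x∘z₁ = −4x`,
`z₁∘y = 2y`, `y∘z₁ = 4y`. -/
theorem stmt7 {g : Type*} [LieRing g] [LieAlgebra ℂ g]
    (n : ℕ) (hn : 2 ≤ n) (x y : g) (z : Fin n → g)
    -- x, y, z₁, ..., z_n form a basis of b_n
    (hindep : LinearIndependent ℂ (Sum.elim ![x, y] z))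
    (hspan : Submodule.span ℂ (Set.range (Sum.elim ![x, y] z)) = ⊤)
    (z₁ z₂ : g) (hz₁ : z₁ = z ⟨0, by omega⟩) (hz₂ : z₂ = z ⟨1, by omega⟩)
    -- the Lie brackets of b_n
    (hb1 : ⁅z₁, x⁆ = (2 : ℂ) • x) (hb2 : ⁅z₁, y⁆ = (-2 : ℂ) • y) (hb3 : ⁅x, y⁆ = z₁)
    (hb4 : ⁅z₂, x⁆ = -x) (hb5 : ⁅z₂, y⁆ = y)
    (hb6 : ∀ i j : Fin n, ⁅z i, z j⁆ = 0)
    (hb7 : ∀ i : Fin n, 2 ≤ (i : ℕ) → ∀ a : g, ⁅z i, a⁆ = 0)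
    -- a compatible anti-pre-Lie algebraic structure
    (c : g →ₗ[ℂ] g →ₗ[ℂ] g)
    (hcompat : ∀ a b : g, c a b - c b a = ⁅a, b⁆)
    (hapl : ∀ a b d : g, c a (c b d) - c b (c a d) = c ⁅b, a⁆ d)
    -- grading conditions
    (hxy : c x y ∈ Submodule.span ℂ (Set.range z))
    (hyx : c y x ∈ Submodule.span ℂ (Set.range z))
    (hzx : ∀ i, c (z i) x ∈ Submodule.span ℂ {x})
    (hxz : ∀ i, c x (z i) ∈ Submodule.span ℂ {x})
    (hzy : ∀ i, c (z i) y ∈ Submodule.span ℂ {y})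
    (hyz : ∀ i, c y (z i) ∈ Submodule.span ℂ {y})
    (hzz : ∀ i j, c (z i) (z j) ∈ Submodule.span ℂ (Set.range z))
    (hxx : c x x = 0) (hyy : c y y = 0) :
    (∀ α : ℂ, c z₁ x = α • x → α ≠ 0 ∧ α ≠ -1) ∧
    c z₁ x = (-2 : ℂ) • x ∧ c x z₁ = (-4 : ℂ) • x ∧
    c z₁ y = (2 : ℂ) • y ∧ c y z₁ = (4 : ℂ) • y := by
  -- nonzero basis vectors
  have hx0 : x ≠ 0 := by simpa using hindep.ne_zero (Sum.inl 0)
  have hy0 : y ≠ 0 := by simpa using hindep.ne_zero (Sum.inl 1)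
  have hz10 : z₁ ≠ 0 := by
    have := hindep.ne_zero (Sum.inr ⟨0, by omega⟩)
    simpa [hz₁] using this
  -- scalars
  obtain ⟨α, hα⟩ := Submodule.mem_span_singleton.mp (hzx ⟨0, by omega⟩)
  obtain ⟨β, hβ⟩ := Submodule.mem_span_singleton.mp (hzy ⟨0, by omega⟩)
  rw [← hz₁] at hα hβ
  replace hα : c z₁ x = α • x := hα.symm
  replace hβ : c z₁ y = β • y := hβ.symm

  -- x∘z₁ and y∘z₁ via compatibility
  have hbx : ⁅x, z₁⁆ = -((2:ℂ) • x) := by rw [← lie_skew, hb1]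
  have hby : ⁅y, z₁⁆ = (2:ℂ) • y := by rw [← lie_skew, hb2]; module
  have hxz1 : c x z₁ = (α - 2) • x := by
    have h := hcompat x z₁
    rw [hbx, hα] at h
    have : c x z₁ = α • x + -((2:ℂ) • x) := by rw [← h]; abel
    rw [this]; module
  have hyz1 : c y z₁ = (β + 2) • y := by
    have h := hcompat y z₁
    rw [hby, hβ] at h
    have : c y z₁ = β • y + (2:ℂ) • y := by rw [← h]; abel
    rw [this]; module
  -- A := c x y, B := c y x
  have hAB : c x y - c y x = z₁ := by rw [hcompat x y, hb3]
  -- eqA : c x (c y x) = -(α • x)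
  have eqA : c x (c y x) = -(α • x) := by
    have h := hapl x y x
    rw [hxx, map_zero] at h
    have hyx' : ⁅y, x⁆ = -z₁ := by rw [← lie_skew, hb3]
    rw [hyx', map_neg, LinearMap.neg_apply, hα] at h
    simpa using h
  have eqB : c y (c x y) = β • y := by
    have h := hapl y x y
    rw [hyy, map_zero, hb3, hβ] at h
    simpa using h
  -- c x (c x y) = -2 x,  c y (c y x) = -2 y
  have hA : c x y = c y x + z₁ := by rw [← hAB]; abel
  have cxA : c x (c x y) = (-2:ℂ) • x := by
    rw [hA, map_add, eqA, hxz1]; module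
  have cyB : c y (c y x) = (-2:ℂ) • y := by
    have hB : c y x = c x y - z₁ := by rw [← hAB]; abel
    rw [hB, map_sub, eqB, hyz1]; module
  -- c z₁ (c x y) = (β - 2) • c x y
  have cz1A : c z₁ (c x y) = (β - 2) • c x y := by
    have h := hapl z₁ x y
    rw [hβ, map_smul, hbx, map_neg, map_smul, LinearMap.neg_apply, LinearMap.smul_apply] at h
    have : c z₁ (c x y) = β • c x y + -((2:ℂ) • c x y) := by rw [← h]; abel
    rw [this]; module
  have cz1B : c z₁ (c y x) = (α + 2) • c y x := by
    have h := hapl z₁ y x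
    rw [hα, map_smul, hby, map_smul, LinearMap.smul_apply] at h
    have : c z₁ (c y x) = α • c y x + (2:ℂ) • c y x := by rw [← h]; abel
    rw [this]; module
  -- eqH : 2 B = (2 - 2β) A
  have hyx' : ⁅y, x⁆ = -z₁ := by rw [← lie_skew, hb3]
  have eqH : (2:ℂ) • c y x = (2 - 2*β) • c x y := by
    have h := hapl x y (c x y)
    rw [eqB, map_smul, cxA, map_smul, hyx', map_neg, LinearMap.neg_apply, cz1A] at h
    -- h eqH : β • c x y - (-2 : ℂ) • c y x = -((β - 2) • c x y)
    linear_combination (norm := module) h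
  -- eqI : 2 A = (2α + 2) B
  have eqI : (2:ℂ) • c x y = (2*α + 2) • c y x := by
    have h := hapl x y (c y x)
    rw [cyB, map_smul, eqA, map_neg, map_smul, hyx', map_neg, LinearMap.neg_apply, cz1B] at h
    -- h : (-2:ℂ) • c x y - (-(α • c y x)) = -((α+2) • c y x)
    linear_combination (norm := module) -h
  -- key vector identities
  have keyB : (2*α) • c y x = (2:ℂ) • z₁ := by
    have : (2:ℂ) • z₁ = (2:ℂ) • c x y - (2:ℂ) • c y x := by rw [← hAB]; module
    rw [this, eqI]; module
  have keyA : (2*β) • c x y = (2:ℂ) • z₁ := by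
    have h : (2:ℂ) • z₁ = (2:ℂ) • c x y - (2:ℂ) • c y x := by rw [← hAB]; module
    rw [h, eqH]; module
  have keyA2 : (2*α) • c x y = (2 + 2*α) • z₁ := by
    have : (2*α) • c x y = (2*α) • c y x + (2*α) • z₁ := by rw [hA]; module
    rw [this, keyB]; module
  -- scalar equation 1 : α² + α - 2 = 0
  have smul_cancel := fun (v : g) (hv : v ≠ 0) (a b : ℂ) (h : a • v = b • v) =>
    smul_left_injective ℂ hv h
  have s1 : α^2 + α - 2 = 0 := by
    have h : c x ((2*α) • c y x) = c x ((2:ℂ) • z₁) := by rw [keyB]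
    rw [map_smul, map_smul, eqA, hxz1] at h
    have h2 : (-(2*α*α)) • x = (2*(α-2)) • x := by
      have := h
      rw [smul_neg] at this
      calc (-(2*α*α)) • x = -((2*α) • (α • x)) := by module
        _ = (2:ℂ) • ((α-2) • x) := this
        _ = (2*(α-2)) • x := by module
    have := smul_cancel x hx0 _ _ h2
    linear_combination (-(1:ℂ)/2) * this
  -- scalar equation 2 : αβ = (1+α)(β+2)
  have s2 : 2*α*β - (2 + 2*α)*(β+2) = 0 := by
    have h : c y ((2*α) • c x y) = c y ((2 + 2*α) • z₁) := by rw [keyA2]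
    rw [map_smul, map_smul, eqB, hyz1] at h
    have h2 : (2*α*β) • y = ((2+2*α)*(β+2)) • y := by
      calc (2*α*β) • y = (2*α) • (β • y) := by module
        _ = (2+2*α) • ((β+2) • y) := h
        _ = ((2+2*α)*(β+2)) • y := by module
    have := smul_cancel y hy0 _ _ h2
    linear_combination this
  -- scalar equation 3 : β(1+α) = α
  have s3 : (2*β)*(2 + 2*α) - 4*α = 0 := by
    have h : (2*β) • ((2*α) • c x y) = (2*α) • ((2*β) • c x y) := by
      rw [smul_smul, smul_smul]; ring_nf
    rw [keyA2, keyA] at h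
    have h2 : ((2*β)*(2+2*α)) • z₁ = (4*α) • z₁ := by
      calc ((2*β)*(2+2*α)) • z₁ = (2*β) • ((2+2*α) • z₁) := by module
        _ = (2*α) • ((2:ℂ) • z₁) := h
        _ = (4*α) • z₁ := by module
    have := smul_cancel z₁ hz10 _ _ h2
    linear_combination this
  -- solve
  have hαv : α = -2 := by
    linear_combination (-(2:ℂ)/3)*s1 + (-(1+α)/6)*s2 + (-(1:ℂ)/12)*s3
  have hβv : β = 2 := by linear_combination (-(1:ℂ)/2)*s2 - 2*hαv
  subst hαv hβv
  have g1 : c z₁ x = (-2:ℂ) • x := hα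
  have g2 : c x z₁ = (-4:ℂ) • x := by rw [hxz1]; norm_num
  have g3 : c z₁ y = (2:ℂ) • y := hβ
  have g4 : c y z₁ = (4:ℂ) • y := by rw [hyz1]; norm_num
  refine ⟨?_, g1, g2, g3, g4⟩
  intro a ha
  have h5 : a • x = (-2:ℂ) • x := by rw [← ha, g1]
  have h6 := smul_cancel x hx0 _ _ h5
  subst h6
  norm_num
end

section
/- Let ∘ be a bilinear operation on a Lie algebra g satisfying the anti-pre-Lie identity a∘(b∘c) − b∘(a∘c) = [b,a]∘c and compatibility a∘b − b∘a = [a,b]. Suppose there exist elements x₁, x₂, x₃, w ∈ g with [x₁, x₂] = x₃, x₁∘w = 2x₁, x₂∘w = 2x₂, and x₃∘w = −4x₃, with x₃ ≠ 0. Then a contradiction follows; i.e., no such elements can exist. -/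
/-- Let `∘` be a bilinear operation on a Lie algebra `g` satisfying the
anti-pre-Lie identity `a∘(b∘c) − b∘(a∘c) = [b,a]∘c` and compatibility
`a∘b − b∘a = [a,b]`.  If `[x₁,x₂] = x₃`, `x₁∘w = 2x₁`, `x₂∘w = 2x₂`, `x₃∘w = −4x₃`
and `x₃ ≠ 0`, then a contradiction follows. -/
theorem stmt13 {g : Type*} [LieRing g] [LieAlgebra ℂ g]
    (c : g →ₗ[ℂ] g →ₗ[ℂ] g)
    (hapl : ∀ a b d : g, c a (c b d) - c b (c a d) = c ⁅b, a⁆ d)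
    (hcompat : ∀ a b : g, c a b - c b a = ⁅a, b⁆)
    (x₁ x₂ x₃ w : g)
    (h12 : ⁅x₁, x₂⁆ = x₃)
    (h1w : c x₁ w = (2 : ℂ) • x₁)
    (h2w : c x₂ w = (2 : ℂ) • x₂)
    (h3w : c x₃ w = (-4 : ℂ) • x₃)
    (h3 : x₃ ≠ 0) :
    False := by
  have key := hapl x₂ x₁ w
  rw [h12, h1w, h2w, h3w, map_smul, map_smul] at key
  -- key : 2 • c x₂ x₁ - 2 • c x₁ x₂ = -4 • x₃ rearranged
  have : (2:ℂ) • ⁅x₂, x₁⁆ = (-4:ℂ) • x₃ := by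
    rw [← hcompat, smul_sub]; exact key
  rw [← lie_skew, h12, smul_neg] at this
  have h2 : ((-2:ℂ)) • x₃ = (-4:ℂ) • x₃ := by
    rw [← this]; module
  have h4 : ((-2:ℂ) - (-4:ℂ)) • x₃ = 0 := by rw [sub_smul, h2, sub_self]
  norm_num at h4
  exact h3 h4
end

section
/- Every finite-dimensional irreducible representation of sl₂(ℂ) of dimension m+1 is isomorphic to V(m), the representation on ⊕_{i=0}^m ℂv_i with h·v_i = (m−2i)v_i, f·v_i = (i+1)v_{i+1}, e·v_i = (m−i+1)v_{i−1}. -/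
/-!
`H` has an eigenvector, and applying `E` to it until it dies gives a primitive vector `v₀`
(`E v₀ = 0`, `H v₀ = λ v₀`). The divided powers `vᵢ = Fⁱ v₀ / i!` then satisfy the relations of the
standard basis of `V(n)`, where finite-dimensionality forces `λ = n ∈ ℕ` and `v_{n+1} = 0`. These
`vᵢ` are `H`-eigenvectors with distinct eigenvalues, hence independent, and their span is stable
under `E`, `F`, `H`, hence everything by irreducibility. So `n = m`, and taking coordinates in this
basis is the isomorphism. (If `H = 0`, then `E = F = 0` and any nonzero vector plays the role of
`v₀` with `n = 0`.)
-/

/-- The action of `e` on `V(m)`: `e·v_i = (m−i+1)v_{i−1}`. -/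
def Eop (m : ℕ) (v : Fin (m + 1) → ℂ) : Fin (m + 1) → ℂ :=
  fun j => if h : (j : ℕ) + 1 < m + 1 then ((m : ℂ) - (j : ℕ)) * v ⟨(j : ℕ) + 1, h⟩ else 0

/-- The action of `f` on `V(m)`: `f·v_i = (i+1)v_{i+1}`. -/
def Fop (m : ℕ) (v : Fin (m + 1) → ℂ) : Fin (m + 1) → ℂ :=
  fun j => ((j : ℕ) : ℂ) *
    v ⟨(j : ℕ) - 1, Nat.lt_of_le_of_lt (Nat.sub_le _ _) j.isLt⟩

/-- The action of `h` on `V(m)`: `h·v_i = (m−2i)v_i`. -/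
def Hop (m : ℕ) (v : Fin (m + 1) → ℂ) : Fin (m + 1) → ℂ :=
  fun j => ((m : ℂ) - 2 * (j : ℕ)) * v j

open LieModule Module Submodule Set

section StandardModule

variable (m : ℕ)

def Eop.toEnd : Module.End ℂ (Fin (m + 1) → ℂ) where
  toFun := Eop m
  map_add' x y := by funext j; simp only [Eop, Pi.add_apply]; split <;> ring
  map_smul' c x := by
    funext j; simp only [Eop, Pi.smul_apply, smul_eq_mul, RingHom.id_apply]; split <;> ring

def Fop.toEnd : Module.End ℂ (Fin (m + 1) → ℂ) where
  toFun := Fop m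
  map_add' x y := by funext j; simp only [Fop, Pi.add_apply]; ring
  map_smul' c x := by
    funext j; simp only [Fop, Pi.smul_apply, smul_eq_mul, RingHom.id_apply]; ring

def Hop.toEnd : Module.End ℂ (Fin (m + 1) → ℂ) where
  toFun := Hop m
  map_add' x y := by funext j; simp only [Hop, Pi.add_apply]; ring
  map_smul' c x := by
    funext j; simp only [Hop, Pi.smul_apply, smul_eq_mul, RingHom.id_apply]; ring

def stdVec (i : ℕ) : Fin (m + 1) → ℂ := fun j => if (j : ℕ) = i then 1 else 0

end StandardModule

/-- The relations of the basis `v₀, …, vₙ` of `V(n)`, for a family indexed by `ℕ` that vanishes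
from `n + 1` on. -/
structure IsSl2String {K V : Type*} [CommRing K] [AddCommGroup V] [Module K V] (n : ℕ)
    (E F H : Module.End K V) (u : ℕ → V) : Prop where
  apply_e_zero : E (u 0) = 0
  apply_e_succ : ∀ i : ℕ, E (u (i + 1)) = ((n : K) - i) • u i
  apply_f : ∀ i : ℕ, F (u i) = ((i : K) + 1) • u (i + 1)
  apply_h : ∀ i : ℕ, H (u i) = ((n : K) - 2 * i) • u i
  succ_eq_zero : u (n + 1) = 0

theorem isSl2String_stdVec (m : ℕ) :
    IsSl2String m (Eop.toEnd m) (Fop.toEnd m) (Hop.toEnd m) (stdVec m) where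
  apply_e_zero := by
    funext j
    simp [Eop.toEnd, Eop, stdVec]
  apply_e_succ i := by
    funext j
    simp only [Eop.toEnd, LinearMap.coe_mk, AddHom.coe_mk, Eop, stdVec, Pi.smul_apply, smul_eq_mul]
    rcases eq_or_ne (j : ℕ) i with rfl | hj
    · rw [if_pos rfl, mul_one]
      by_cases h : (j : ℕ) + 1 < m + 1
      · rw [dif_pos h, if_pos rfl, mul_one]
      · rw [dif_neg h, show (j : ℕ) = m by omega, sub_self]
    · simp [hj]
  apply_f i := by
    funext j
    simp only [Fop.toEnd, LinearMap.coe_mk, AddHom.coe_mk, Fop, stdVec, Pi.smul_apply, smul_eq_mul]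
    rcases eq_or_ne (j : ℕ) (i + 1) with hj | hj
    · simp [hj]
    · rw [if_neg hj, mul_zero]
      split_ifs with h
      · rw [show (j : ℕ) = 0 by omega, Nat.cast_zero, zero_mul]
      · rw [mul_zero]
  apply_h i := by
    funext j
    simp only [Hop.toEnd, LinearMap.coe_mk, AddHom.coe_mk, Hop, stdVec, Pi.smul_apply, smul_eq_mul]
    rcases eq_or_ne (j : ℕ) i with rfl | hj <;> simp [*]
  succ_eq_zero := by
    funext j
    simp only [stdVec, Pi.zero_apply, ite_eq_right_iff, one_ne_zero]
    omega

namespace IsSl2String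

section CommRing

variable {K V : Type*} [CommRing K] [AddCommGroup V] [Module K V] {n : ℕ}
  {E F H : Module.End K V} {u : ℕ → V}

theorem span_eq_top (hu : IsSl2String n E F H u) (h0 : u 0 ≠ 0)
    (hirr : ∀ W : Submodule K V, (∀ v ∈ W, E v ∈ W ∧ F v ∈ W ∧ H v ∈ W) → W = ⊥ ∨ W = ⊤) :
    span K (range u) = ⊤ := by
  have hmem : ∀ i, u i ∈ span K (range u) := fun i => subset_span ⟨i, rfl⟩
  have hinv : ∀ T : Module.End K V, (∀ i, T (u i) ∈ span K (range u)) →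
      ∀ v ∈ span K (range u), T v ∈ span K (range u) := fun T hT _ hv =>
    (map_span_le T _ _).mpr (forall_mem_range.mpr hT) (mem_map_of_mem hv)
  refine (hirr _ fun v hv => ⟨hinv E ?_ v hv, hinv F ?_ v hv, hinv H ?_ v hv⟩).resolve_left ?_
  · rintro (_ | i)
    · simp [hu.apply_e_zero]
    · simpa [hu.apply_e_succ] using smul_mem _ _ (hmem i)
  · intro i
    simpa [hu.apply_f] using smul_mem _ _ (hmem (i + 1))
  · intro i
    simpa [hu.apply_h] using smul_mem _ _ (hmem i)
  · exact fun hbot => h0 (by simpa [hbot] using hmem 0)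

theorem comp_eq_comp {W : Type*} [AddCommGroup W] [Module K W] {E' F' H' : Module.End K W}
    {s : ℕ → W} (hu : IsSl2String n E F H u) (hs : IsSl2String n E' F' H' s)
    (hspan : span K (range u) = ⊤) (φ : V →ₗ[K] W) (hφ : ∀ i, φ (u i) = s i) :
    φ ∘ₗ E = E' ∘ₗ φ ∧ φ ∘ₗ F = F' ∘ₗ φ ∧ φ ∘ₗ H = H' ∘ₗ φ := by
  refine ⟨LinearMap.ext_on_range hspan ?_, LinearMap.ext_on_range hspan ?_,
    LinearMap.ext_on_range hspan ?_⟩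
  · rintro (_ | i)
    · simp [hφ, hu.apply_e_zero, hs.apply_e_zero]
    · simp [hφ, hu.apply_e_succ, hs.apply_e_succ]
  · intro i
    simp [hφ, hu.apply_f, hs.apply_f]
  · intro i
    simp [hφ, hu.apply_h, hs.apply_h]

end CommRing

section Field

variable {K V : Type*} [Field K] [CharZero K] [AddCommGroup V] [Module K V] {n : ℕ}
  {E F H : Module.End K V} {u : ℕ → V}

theorem eq_zero_of_lt (hu : IsSl2String n E F H u) {i : ℕ} (hi : n < i) : u i = 0 := by
  induction i, hi using Nat.le_induction with
  | base => exact hu.succ_eq_zero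
  | succ i _ ih =>
    have h := hu.apply_f i
    rw [ih, map_zero, eq_comm, smul_eq_zero] at h
    exact h.resolve_left (Nat.cast_add_one_ne_zero i)

theorem ne_zero (hu : IsSl2String n E F H u) (h0 : u 0 ≠ 0) {i : ℕ} (hi : i ≤ n) : u i ≠ 0 := by
  induction i with
  | zero => exact h0
  | succ i ih =>
    intro hzero
    have h := hu.apply_e_succ i
    rw [hzero, map_zero, eq_comm, smul_eq_zero, sub_eq_zero, Nat.cast_inj] at h
    exact h.elim (by omega) (ih (by omega))

theorem linearIndependent (hu : IsSl2String n E F H u) (h0 : u 0 ≠ 0) :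
    LinearIndependent K fun i : Fin (n + 1) => u i :=
  H.eigenvectors_linearIndependent' (fun i : Fin (n + 1) => (n : K) - 2 * (i : ℕ))
    (fun i j hij => Fin.ext (by simpa using hij))
    _ (fun i => ⟨Module.End.mem_eigenspace_iff.mpr (hu.apply_h i), hu.ne_zero h0 (by omega)⟩)

theorem span_range_fin (hu : IsSl2String n E F H u) :
    span K (range fun i : Fin (n + 1) => u i) = span K (range u) := by
  refine le_antisymm (span_mono (range_comp_subset_range _ u)) (span_le.mpr ?_)
  rintro _ ⟨i, rfl⟩
  by_cases hi : i ≤ n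
  · exact subset_span ⟨⟨i, by omega⟩, rfl⟩
  · rw [hu.eq_zero_of_lt (by omega)]
    exact zero_mem _

end Field

end IsSl2String

theorem IsSl2Triple.HasPrimitiveVectorWith.isSl2String {K L M : Type*} [Field K] [CharZero K]
    [LieRing L] [LieAlgebra K L] [AddCommGroup M] [Module K M] [LieRingModule L M]
    [LieModule K L M] [FiniteDimensional K M] {h e f : L} {t : IsSl2Triple h e f} {m : M}
    {n : ℕ} (P : t.HasPrimitiveVectorWith m (n : K)) :
    IsSl2String n (toEnd K L M e) (toEnd K L M f) (toEnd K L M h)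
      fun i => (i.factorial : K)⁻¹ • (toEnd K L M f ^ i) m where
  apply_e_zero := by simpa using P.lie_e
  apply_e_succ i := by
    rw [map_smul, toEnd_apply_apply, P.lie_e_pow_succ_toEnd_f, smul_smul, smul_smul,
      Nat.factorial_succ]
    congr 1
    push_cast
    field_simp
  apply_f i := by
    rw [map_smul, ← Module.End.mul_apply, ← pow_succ', smul_smul, Nat.factorial_succ]
    congr 1
    push_cast
    field_simp
  apply_h i := by
    rw [map_smul, toEnd_apply_apply, P.lie_h_pow_toEnd_f, smul_comm]
  succ_eq_zero := by
    rw [P.pow_toEnd_f_eq_zero_of_eq_nat rfl, smul_zero]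

theorem Module.End.exists_isSl2String {K V : Type*} [Field K] [CharZero K] [IsAlgClosed K]
    [AddCommGroup V] [Module K V] [FiniteDimensional K V] [Nontrivial V]
    {E F H : Module.End K V} (hEF : E * F - F * E = H) (hHE : H * E - E * H = (2 : K) • E)
    (hHF : H * F - F * H = (-2 : K) • F) :
    ∃ (n : ℕ) (u : ℕ → V), IsSl2String n E F H u ∧ u 0 ≠ 0 := by
  by_cases hH : H = 0
  · obtain ⟨v, hv⟩ := exists_ne (0 : V)
    have hE : E = 0 := by simpa [hH] using hHE.symm
    have hF : F = 0 := by simpa [hH] using hHF.symm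
    refine ⟨0, Pi.single 0 v, ⟨?_, ?_, ?_, ?_, ?_⟩, by simpa using hv⟩ <;> intros <;>
      simp [hE, hF, hH, Pi.single_apply, or_iff_not_imp_left] <;> tauto
  · -- the commutator bracket on `Module.End K V` is not a global instance
    let _ := LieRing.ofAssociativeRing (A := Module.End K V)
    have t : IsSl2Triple H E F :=
      ⟨hH, hEF, by rw [Ring.lie_def, hHE, ofNat_smul_eq_nsmul],
        by rw [Ring.lie_def, hHF, neg_smul, ofNat_smul_eq_nsmul]⟩
    obtain ⟨μ, v, -, P⟩ := t.exists_hasPrimitiveVectorWith (R := K) (M := V)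
    obtain ⟨n, rfl⟩ := P.exists_nat
    exact ⟨n, _, by simpa using P.isSl2String, by simpa using P.ne_zero⟩

theorem IsSl2String.equivFun_eq_stdVec {V : Type*} [AddCommGroup V] [Module ℂ V] {m : ℕ}
    {E F H : Module.End ℂ V} {u : ℕ → V} (hu : IsSl2String m E F H u)
    (b : Basis (Fin (m + 1)) ℂ V) (hb : ∀ i : Fin (m + 1), b i = u i) (i : ℕ) :
    b.equivFun (u i) = stdVec m i := by
  by_cases hi : i ≤ m
  · funext j
    rw [← hb ⟨i, by omega⟩, b.equivFun_self]
    simp [stdVec, Fin.ext_iff, eq_comm]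
  · rw [hu.eq_zero_of_lt (by omega), (isSl2String_stdVec m).eq_zero_of_lt (by omega), map_zero]

/-- Every `(m+1)`-dimensional irreducible representation of `sl₂(ℂ)` is
isomorphic to `V(m)` via an `sl₂(ℂ)`-equivariant linear isomorphism. -/
theorem stmt16 {V : Type*} [AddCommGroup V] [Module ℂ V] (m : ℕ)
    (hdim : Module.finrank ℂ V = m + 1)
    (E F H : V →ₗ[ℂ] V)
    (hHE : ∀ v, H (E v) - E (H v) = (2 : ℂ) • E v)
    (hHF : ∀ v, H (F v) - F (H v) = (-2 : ℂ) • F v)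
    (hEF : ∀ v, E (F v) - F (E v) = H v)
    (hirr : ∀ W : Submodule ℂ V,
      (∀ v ∈ W, E v ∈ W ∧ F v ∈ W ∧ H v ∈ W) → W = ⊥ ∨ W = ⊤) :
    ∃ φ : V ≃ₗ[ℂ] (Fin (m + 1) → ℂ),
      (∀ v, φ (E v) = Eop m (φ v)) ∧
      (∀ v, φ (F v) = Fop m (φ v)) ∧
      (∀ v, φ (H v) = Hop m (φ v)) := by
  have : FiniteDimensional ℂ V := .of_finrank_pos (by omega)
  have : Nontrivial V := Module.nontrivial_of_finrank_pos (R := ℂ) (by omega)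
  obtain ⟨n, u, hu, hu0⟩ :=
    Module.End.exists_isSl2String (LinearMap.ext hEF) (LinearMap.ext hHE) (LinearMap.ext hHF)
  have hspan := hu.span_eq_top hu0 hirr
  let b := Basis.mk (hu.linearIndependent hu0) (by rw [hu.span_range_fin, hspan])
  obtain rfl : n = m := by simpa [hdim] using (finrank_eq_card_basis b).symm
  obtain ⟨hE, hF, hH⟩ := hu.comp_eq_comp (isSl2String_stdVec n) hspan b.equivFun.toLinearMap
    (hu.equivFun_eq_stdVec b (Basis.mk_apply _ _))
  exact ⟨b.equivFun, LinearMap.congr_fun hE, LinearMap.congr_fun hF, LinearMap.congr_fun hH⟩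
end
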